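/- arXiv:1711.10239 — 3 statements merged into one kernel-verified Lean document; each statement's English description precedes it below -/
import Mathlib

section
/- Multi-pre-Lie identity for the grafting operators on decorated trees (identity 'pre_lie_identity'): For all (𝔱₁,p₁), (𝔱₂,p₂) ∈ 𝒪 and all τ₁, τ₂, τ₃ ∈ 𝒱 one has, in 𝕍, (τ₁ ⋖̂_{(𝔱₁,p₁)} τ₂) ⋖̂_{(𝔱₂,p₂)} τ₃ − τ₁ ⋖̂_{(𝔱₁,p₁)} (τ₂ ⋖̂_{(𝔱₂,p₂)} τ₃) = (τ₂ ⋖̂_{(𝔱₂,p₂)} τ₁) ⋖̂_{(𝔱₁,p₁)} τ₃ − τ₂ ⋖̂_{(𝔱₂,p₂)} (τ₁ ⋖̂_{(𝔱₁,p₁)} τ₃). -/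
/-
Common framework: multi-indices, the algebra of smooth functions on ℝ^𝒪,
and the spaces of decorated trees 𝒱 and 𝔅 of [Bruned–Chandra–Chevyrev–Hairer,
"Renormalising SPDEs in regularity structures"], presented abstractly together
with the defining recursions of the various operators on them.
-/

open scoped BigOperators Classical

namespace SPDERenorm

/-! ### Multi-indices in `ℕ^{d+1}` -/

abbrev MIdx (d : ℕ) := Fin (d+1) → ℕ

/-- `k! = ∏ᵢ k[i]!`. -/
def mfact {d : ℕ} (k : MIdx d) : ℕ := ∏ i, Nat.factorial (k i)

/-- `C(k,ℓ) = ∏ᵢ binom(k[i], ℓ[i])`. -/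
def mchoose {d : ℕ} (k l : MIdx d) : ℕ := ∏ i, Nat.choose (k i) (l i)

/-- `|k| = Σᵢ k[i]`. -/
def msize {d : ℕ} (k : MIdx d) : ℕ := ∑ i, k i

/-- The unit multi-index `e_i`. -/
def munit {d : ℕ} (i : Fin (d+1)) : MIdx d := Pi.single i 1

/-- Sum of `f ℓ` over all multi-indices `ℓ ≤ m` (componentwise). -/
noncomputable def msum {d : ℕ} {A : Type*} [AddCommMonoid A] (m : MIdx d) (f : MIdx d → A) : A :=
  ∑ e : (∀ i : Fin (d+1), Fin (m i + 1)), f fun i => (e i : ℕ)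

/-- The scaled size `|k|_𝔰 = Σᵢ k[i]·𝔰ᵢ`. -/
noncomputable def wdeg {d : ℕ} (s : Fin (d+1) → ℝ) (k : MIdx d) : ℝ := ∑ i, (k i : ℝ) * s i

/-- The index set `𝒪 = 𝔏₊ × ℕ^{d+1}`. -/
abbrev Odx (Lp : Type) (d : ℕ) := Lp × MIdx d

/-! ### Functions on `ℝ^𝒪` and differential operators -/

/-- Real-valued functions on `ℝ^𝒪`. -/
abbrev FnO (Lp : Type) (d : ℕ) := (Odx Lp d → ℝ) → ℝ

/-- The coordinate function `𝒳_o`. -/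
def Xc {Lp : Type} {d : ℕ} (o : Odx Lp d) : FnO Lp d := fun x => x o

/-- The partial derivative `D_o` in the `o`-th coordinate. -/
noncomputable def Dpart {Lp : Type} {d : ℕ} [DecidableEq Lp] (o : Odx Lp d) (F : FnO Lp d) :
    FnO Lp d :=
  fun x => deriv (fun t : ℝ => F (Function.update x o t)) (x o)

/-- Iterated partial derivatives `D_{o₁} ∘ ⋯ ∘ D_{oₙ}` over a list. -/
noncomputable def Dlist {Lp : Type} {d : ℕ} [DecidableEq Lp] (L : List (Odx Lp d))
    (F : FnO Lp d) : FnO Lp d :=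
  L.foldr Dpart F

/-- The derivation `∂_i F = Σ_{(𝔱,p)} 𝒳_{(𝔱,p+e_i)} · D_{(𝔱,p)} F`. -/
noncomputable def pderivO {Lp : Type} {d : ℕ} [DecidableEq Lp] (i : Fin (d+1)) (F : FnO Lp d) :
    FnO Lp d :=
  fun x => ∑ᶠ o : Odx Lp d, Xc (o.1, o.2 + munit i) x * Dpart o F x

/-- `∂^k = ∏ᵢ ∂ᵢ^{k[i]}`. -/
noncomputable def mpderiv {Lp : Type} {d : ℕ} [DecidableEq Lp] (k : MIdx d) (F : FnO Lp d) :
    FnO Lp d :=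
  (List.finRange (d+1)).foldr (fun i G => (pderivO i)^[k i] G) F

/-- `D^α` for a finitely supported `α ∈ ℕ^𝒪`. -/
noncomputable def Dexp {Lp : Type} {d : ℕ} [DecidableEq Lp] (α : Odx Lp d →₀ ℕ)
    (F : FnO Lp d) : FnO Lp d :=
  Dlist (Finsupp.toMultiset α).toList F

/-- `α! = ∏_o α[o]!`. -/
def afact {Lp : Type} {d : ℕ} (α : Odx Lp d →₀ ℕ) : ℕ := α.prod fun _ n => Nat.factorial n

/-- The monomial `𝒳^α`. -/
noncomputable def Xpow {Lp : Type} {d : ℕ} (α : Odx Lp d →₀ ℕ) : FnO Lp d :=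
  fun x => α.prod fun o n => x o ^ n

/-- `F` depends only on the coordinates in `s`. -/
def DependsOnlyOn {Lp : Type} {d : ℕ} (F : FnO Lp d) (s : Set (Odx Lp d)) : Prop :=
  ∀ x y, (∀ o ∈ s, x o = y o) → F x = F y

/-- Membership in `𝒞_𝒪`: smooth functions depending on finitely many coordinates. -/
def IsSmoothCO {Lp : Type} {d : ℕ} (F : FnO Lp d) : Prop :=
  ∃ (s : Finset (Odx Lp d)) (g : (↥s → ℝ) → ℝ),
    ContDiff ℝ (⊤ : ℕ∞) g ∧ ∀ x, F x = g fun o => x o.1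

/-- Membership in `𝒫 ⊆ 𝒞_𝒪` (relative to the partition `𝒪 = 𝒪₊ ⊔ 𝒪₋`). -/
def IsP {Lp : Type} {d : ℕ} (Om Op : Set (Odx Lp d)) (F : FnO Lp d) : Prop :=
  ∃ (m : ℕ) (α : Fin m → (Odx Lp d →₀ ℕ)) (G : Fin m → FnO Lp d),
    Function.Injective α ∧
    (∀ j, ∀ o ∈ (α j).support, o ∈ Om) ∧
    (∀ j, IsSmoothCO (G j)) ∧
    (∀ j, G j ≠ 0) ∧
    (∀ j, DependsOnlyOn (G j) Op) ∧
    F = fun x => ∑ j, G j x * Xpow (α j) x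

/-- `F` is a real polynomial in finitely many of the coordinate functions. -/
def IsPolyFn {Lp : Type} {d : ℕ} (F : FnO Lp d) : Prop :=
  ∃ (s : Finset (Odx Lp d)) (P : MvPolynomial (↥s) ℝ),
    ∀ x, F x = MvPolynomial.eval (fun o => x o.1) P

/-! ### The trees of `𝒱` -/

/-- The set `𝒱` of decorated rooted trees, presented abstractly: a tree is uniquely
built from a root decoration `(𝔩,k) ∈ 𝔇 × ℕ^{d+1}` and a multiset of decorated branches,
and every tree arises this way (induction). -/
structure TreeV (Lp Dr : Type) (d : ℕ) where
  V : Type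
  node : Dr → MIdx d → Multiset (Odx Lp d × V) → V
  node_bij : Function.Bijective
    (fun x : Dr × MIdx d × Multiset (Odx Lp d × V) => node x.1 x.2.1 x.2.2)
  ind : ∀ P : V → Prop,
    (∀ l k (M : Multiset (Odx Lp d × V)), (∀ x ∈ M, P x.2) → P (node l k M)) → ∀ τ, P τ

namespace TreeV

variable {Lp Dr : Type} {d : ℕ} (S : TreeV Lp Dr d)

/-- Rebuild a tree after replacing the `j`-th branch by a linear combination of trees. -/
noncomputable def replace (l : Dr) (k : MIdx d) (L : List (Odx Lp d × S.V))
    (j : Fin L.length) (w : S.V →₀ ℝ) : S.V →₀ ℝ :=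
  w.sum fun τ' c => Finsupp.single (S.node l k (↑(L.set j ((L.get j).1, τ')))) c

/-- Decomposition of a tree into its root decoration and branches. -/
noncomputable def dec : S.V ≃ Dr × MIdx d × Multiset (Odx Lp d × S.V) :=
  (Equiv.ofBijective _ S.node_bij).symm

/-- The polynomial decoration at the root. -/
noncomputable def polyOf (τ : S.V) : MIdx d := (S.dec τ).2.1

/-- The multiset of branches at the root. -/
noncomputable def branchesOf (τ : S.V) : Multiset (Odx Lp d × S.V) := (S.dec τ).2.2

/-- The commutative tree product merging the roots of `g 0, …, g (n-1)`
(adding the polynomial decorations), the merged root receiving the driver label `l`. -/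
noncomputable def merge (l : Dr) {n : ℕ} (g : Fin n → S.V) : S.V :=
  S.node l (∑ r, S.polyOf (g r)) (∑ r, S.branchesOf (g r))

/-- Defining recursion of the grafting operators `⋖̂_o : 𝕍 ⊗ 𝕍 → 𝕍`. -/
def GraftSpec [DecidableEq Lp] (graft : Odx Lp d → S.V → S.V → (S.V →₀ ℝ)) : Prop :=
  ∀ (t : Lp) (p : MIdx d) (τ : S.V) (l : Dr) (k : MIdx d) (L : List (Odx Lp d × S.V)),
    graft (t, p) τ (S.node l k ↑L) =
      msum (k ⊓ p) (fun ℓ =>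
        (mchoose k ℓ : ℝ) •
          Finsupp.single (S.node l (k - ℓ) (((t, p - ℓ), τ) ::ₘ (↑L : Multiset _))) 1)
      + ∑ j : Fin L.length, S.replace l k L j (graft (t, p) τ (L.get j).2)

/-- Defining recursion of the symmetry factor `S(τ)`. -/
def SymSpec [DecidableEq Lp] [DecidableEq S.V] (sym : S.V → ℕ) : Prop :=
  ∀ (l : Dr) (k : MIdx d) (M : Multiset (Odx Lp d × S.V)),
    sym (S.node l k M) =
      mfact k * ∏ x ∈ M.toFinset, Nat.factorial (M.count x) * sym x.2 ^ M.count x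

/-- Defining recursion of the inner product on `𝕍`. -/
def IPSpec (ip : S.V → S.V → ℝ) : Prop :=
  ∀ (l l' : Dr) (k k' : MIdx d) (L L' : List (Odx Lp d × S.V)),
    ip (S.node l k ↑L) (S.node l' k' ↑L') =
      (if l = l' ∧ k = k' then (mfact k : ℝ) else 0) *
        ∑ s : Fin L.length ≃ Fin L'.length,
          ∏ j : Fin L.length,
            (if (L.get j).1 = (L'.get (s j)).1 then ip (L.get j).2 (L'.get (s j)).2 else 0)

/-- Defining recursion of `Υ^F`. -/
def UpsSpec [DecidableEq Lp] (F : Lp → Dr → FnO Lp d) (Ups : Lp → S.V → FnO Lp d) : Prop :=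
  ∀ (t : Lp) (l : Dr) (k : MIdx d) (L : List (Odx Lp d × S.V)),
    Ups t (S.node l k ↑L) = fun x =>
      (∏ j : Fin L.length, Ups (L.get j).1.1 (L.get j).2 x) *
        mpderiv k (Dlist (L.map Prod.fst) (F t l)) x

/-- Defining recursion of the raising operator `↑̂_i` on `𝕍`. -/
def RaiseSpec (raise : Fin (d+1) → S.V → (S.V →₀ ℝ)) : Prop :=
  ∀ (i : Fin (d+1)) (l : Dr) (k : MIdx d) (L : List (Odx Lp d × S.V)),
    raise i (S.node l k ↑L) =
      Finsupp.single (S.node l (k + munit i) ↑L) 1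
      + ∑ j : Fin L.length, S.replace l k L j (raise i (L.get j).2)

/-- Defining recursion of the cutting operator `⋖̂*_o : 𝕍 → 𝕍 ⊗ 𝕍` (elements of
`𝕍 ⊗ 𝕍` represented as finitely supported functions on pairs of trees, a pair
`(branch, trunk)` recording a cut). -/
def CutSpec [DecidableEq Lp] (cut : Odx Lp d → S.V → (S.V × S.V →₀ ℝ)) : Prop :=
  ∀ (t : Lp) (p : MIdx d) (l : Dr) (k : MIdx d) (L : List (Odx Lp d × S.V)),
    cut (t, p) (S.node l k ↑L) =
      (∑ j : Fin L.length,
        if (L.get j).1.1 = t ∧ (L.get j).1.2 ≤ p then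
          ((mfact (p - (L.get j).1.2) : ℝ))⁻¹ •
            Finsupp.single ((L.get j).2,
              S.node l (k + (p - (L.get j).1.2)) ↑(L.eraseIdx j)) 1
        else 0)
      + ∑ j : Fin L.length,
          (cut (t, p) (L.get j).2).sum fun ab c =>
            Finsupp.single (ab.1, S.node l k ↑(L.set j ((L.get j).1, ab.2))) c

/-- Defining recursion of the lowering operator `↑̂*_i` on `𝕍`. -/
def LowSpec (low : Fin (d+1) → S.V → (S.V →₀ ℝ)) : Prop :=
  ∀ (i : Fin (d+1)) (l : Dr) (k : MIdx d) (L : List (Odx Lp d × S.V)),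
    low i (S.node l k ↑L) =
      (k i : ℝ) • Finsupp.single (S.node l (k - munit i) ↑L) 1
      + ∑ j : Fin L.length, S.replace l k L j (low i (L.get j).2)

/-- Defining recursion of the predicate "`τ` is `𝔱`-non-vanishing for `F`". -/
def NVSpec [DecidableEq Lp] (F : Lp → Dr → FnO Lp d) (NV : Lp → S.V → Prop) : Prop :=
  ∀ (t : Lp) (l : Dr) (k : MIdx d) (L : List (Odx Lp d × S.V)),
    NV t (S.node l k ↑L) ↔
      (mpderiv k (Dlist (L.map Prod.fst) (F t l)) ≠ 0 ∧
        ∀ j : Fin L.length, NV (L.get j).1.1 (L.get j).2)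

/-- The coefficient series of `U_o − u_o·𝟏`, for the jet `U` with Taylor coefficients `u`
and planted-tree coefficients `c_𝔱(τ)/S(τ)`. -/
noncomputable def uSeries (z : Dr) (u : Odx Lp d → ℝ) (c : Lp → S.V → ℝ) (sym : S.V → ℕ)
    (o : Odx Lp d) (σ : S.V) : ℝ :=
  (∑ᶠ q : MIdx d, if q ≠ 0 ∧ σ = S.node z q 0 then u (o.1, o.2 + q) / (mfact q : ℝ) else 0) +
  ∑ᶠ τ : S.V, if σ = S.node z 0 {(o, τ)} then c o.1 τ / (sym τ : ℝ) else 0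

/-- The coefficient series of the product `(U − u·𝟏)^α · Ξ_l`, expanded by multilinearity
using the commutative tree product merging the roots. -/
noncomputable def powCoef (coef : Odx Lp d → S.V → ℝ) (l : Dr) (α : Odx Lp d →₀ ℕ)
    (σ : S.V) : ℝ :=
  ∑ᶠ g : Fin (Finsupp.toMultiset α).toList.length → S.V,
    (∏ r, coef ((Finsupp.toMultiset α).toList.get r) (g r)) *
      (if σ = S.merge l g then 1 else 0)

/-- The coefficient series of `Σ_{𝔩∈𝔇} F^𝔩_𝔱(U)·Ξ_𝔩`, where
`F^𝔩_𝔱(U)·Ξ_𝔩 = Σ_α (D^α F^𝔩_𝔱(u)/α!)·(U − u·𝟏)^α·Ξ_𝔩`. -/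
noncomputable def lhsCoef [DecidableEq Lp] (F : Lp → Dr → FnO Lp d) (u : Odx Lp d → ℝ)
    (coef : Odx Lp d → S.V → ℝ) (t : Lp) (σ : S.V) : ℝ :=
  ∑ᶠ l : Dr, ∑ᶠ α : Odx Lp d →₀ ℕ,
    Dexp α (F t l) u / (afact α : ℝ) * S.powCoef coef l α σ

/-- Defining recursion of the 𝔰-degree `|·|_𝔰` of decorated trees (with driver labels in
`𝔏₋ ⊔ {𝟎}`, encoded as `Option Lm` with `none = 𝟎`). -/
def DegSpec {Lm : Type} (S : TreeV Lp (Option Lm) d) (s : Fin (d+1) → ℝ)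
    (degL : Lp → ℝ) (degLm : Lm → ℝ) (deg : S.V → ℝ) : Prop :=
  ∀ (l : Option Lm) (k : MIdx d) (M : Multiset (Odx Lp d × S.V)),
    deg (S.node l k M) =
      l.elim 0 degLm + wdeg s k +
        ((M.map fun x => (degL x.1.1 - wdeg s x.1.2) + deg x.2).sum)

end TreeV

/-! ### The trees of `𝔅` -/

/-- Polynomial node-decoration factors `𝓘_{(𝔱,p)}[X^k]` with `p ≤ k` and `p ≠ k`;
an element is a pair `((𝔱,p), k)` subject to these constraints. -/
abbrev PolyDec (Lp : Type) (d : ℕ) :=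
  {x : Odx Lp d × MIdx d // x.1.2 ≤ x.2 ∧ x.1.2 ≠ x.2}

/-- Raise the polynomial exponent of a `PolyDec` by `e_i`. -/
def PolyDec.bump {Lp : Type} {d : ℕ} (pd : PolyDec Lp d) (i : Fin (d+1)) : PolyDec Lp d :=
  ⟨(pd.1.1, pd.1.2 + munit i), by
    constructor
    · exact fun j => le_trans (pd.2.1 j) (Nat.le_add_right _ _)
    · intro h
      have hi : pd.1.1.2 i ≤ pd.1.2 i := pd.2.1 i
      have h' : pd.1.1.2 i = pd.1.2 i + munit i i := congrFun h i
      simp only [munit, Pi.single_eq_same] at h'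
      omega⟩

/-- The fresh polynomial decoration `𝓘_{(𝔱,p)}[X^{p+e_i}]`. -/
def freshPD {Lp : Type} {d : ℕ} (o : Odx Lp d) (i : Fin (d+1)) : PolyDec Lp d :=
  ⟨(o, o.2 + munit i), by
    constructor
    · exact fun j => Nat.le_add_right _ _
    · intro h
      have h' : o.2 i = o.2 i + munit i i := congrFun h i
      simp only [munit, Pi.single_eq_same] at h'
      omega⟩

/-- Lower the polynomial exponent of a `PolyDec` by `e_i`. -/
def PolyDec.lower {Lp : Type} {d : ℕ} (pd : PolyDec Lp d) (i : Fin (d+1))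
    (h : pd.1.1.2 + munit i ≤ pd.1.2) (hne : ¬ pd.1.2 - munit i = pd.1.1.2) : PolyDec Lp d :=
  ⟨(pd.1.1, pd.1.2 - munit i), by
    constructor
    · intro j
      have hj := h j
      simp only [Pi.add_apply, Pi.sub_apply] at hj ⊢
      omega
    · exact fun hh => hne hh.symm⟩

/-- The set `𝔅` of decorated rooted trees with polynomial node decorations, presented
abstractly. -/
structure TreeB (Lp Dr : Type) (d : ℕ) where
  B : Type
  node : Dr → Multiset (PolyDec Lp d) → Multiset (Odx Lp d × B) → B
  node_bij : Function.Bijective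
    (fun x : Dr × Multiset (PolyDec Lp d) × Multiset (Odx Lp d × B) => node x.1 x.2.1 x.2.2)
  ind : ∀ P : B → Prop,
    (∀ l N (M : Multiset (Odx Lp d × B)), (∀ x ∈ M, P x.2) → P (node l N M)) → ∀ σ, P σ

namespace TreeB

variable {Lp Dr : Type} {d : ℕ} (S : TreeB Lp Dr d)

/-- Rebuild a tree after replacing the `j`-th branch by a linear combination of trees. -/
noncomputable def replace (l : Dr) (N : List (PolyDec Lp d)) (L : List (Odx Lp d × S.B))
    (j : Fin L.length) (w : S.B →₀ ℝ) : S.B →₀ ℝ :=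
  w.sum fun σ' c => Finsupp.single (S.node l ↑N (↑(L.set j ((L.get j).1, σ')))) c

/-- Defining recursion of `Υ̊^F`. -/
def UpsSpec [DecidableEq Lp] (F : Lp → Dr → FnO Lp d) (Ups : Lp → S.B → FnO Lp d) : Prop :=
  ∀ (t : Lp) (l : Dr) (N : List (PolyDec Lp d)) (L : List (Odx Lp d × S.B)),
    Ups t (S.node l ↑N ↑L) = fun x =>
      (∏ i : Fin N.length, x ((N.get i).1.1.1, (N.get i).1.2)) *
      (∏ j : Fin L.length, Ups (L.get j).1.1 (L.get j).2 x) *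
      Dlist (N.map (fun pd => pd.1.1) ++ L.map Prod.fst) (F t l) x

/-- Defining recursion of the grafting operators `⋖_o` on `𝔅`. -/
def GraftSpec (graft : Odx Lp d → S.B → S.B → (S.B →₀ ℝ)) : Prop :=
  ∀ (o : Odx Lp d) (σ' : S.B) (l : Dr) (N : List (PolyDec Lp d)) (L : List (Odx Lp d × S.B)),
    graft o σ' (S.node l ↑N ↑L) =
      Finsupp.single (S.node l ↑N ((o, σ') ::ₘ (↑L : Multiset _))) 1
      + (∑ j : Fin L.length, S.replace l N L j (graft o σ' (L.get j).2))
      + ∑ i : Fin N.length,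
          (if o = ((N.get i).1.1.1, (N.get i).1.2) then
            Finsupp.single
              (S.node l ↑(N.eraseIdx i) (((N.get i).1.1, σ') ::ₘ (↑L : Multiset _))) 1
          else 0)

/-- Defining recursion of the inner product on `𝔹`. -/
def IPSpec (ip : S.B → S.B → ℝ) : Prop :=
  ∀ (l l' : Dr) (N N' : List (PolyDec Lp d)) (L L' : List (Odx Lp d × S.B)),
    ip (S.node l ↑N ↑L) (S.node l' ↑N' ↑L') =
      (if l = l' then 1 else 0) *
      (∑ s : Fin N.length ≃ Fin N'.length,
        ∏ i : Fin N.length,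
          (if (N.get i).1 = (N'.get (s i)).1 then
            (mfact ((N.get i).1.2 - (N.get i).1.1.2) : ℝ)
          else 0)) *
      ∑ s : Fin L.length ≃ Fin L'.length,
        ∏ j : Fin L.length,
          (if (L.get j).1 = (L'.get (s j)).1 then ip (L.get j).2 (L'.get (s j)).2 else 0)

/-- Defining recursion of the raising operator `↑_i` on `𝔅`, producing a formal series
(represented by its coefficient function `𝔅 → ℝ`). -/
def RaiseSpec (raise : Fin (d+1) → S.B → (S.B → ℝ)) : Prop :=
  ∀ (i : Fin (d+1)) (l : Dr) (N : List (PolyDec Lp d)) (L : List (Odx Lp d × S.B)),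
    raise i (S.node l ↑N ↑L) = fun σ'' =>
      (∑ ib : Fin N.length,
        (if σ'' = S.node l ↑(N.set ib ((N.get ib).bump i)) ↑L then 1 else 0))
      + (if ∃ o : Odx Lp d, σ'' = S.node l (freshPD o i ::ₘ (↑N : Multiset _)) ↑L then 1 else 0)
      + ∑ j : Fin L.length,
          ∑ᶠ σ' : S.B,
            raise i (L.get j).2 σ' *
              (if σ'' = S.node l ↑N ↑(L.set j ((L.get j).1, σ')) then 1 else 0)

/-- Defining recursion of the lowering operator `↑*_i` on `𝔅`. -/
def LowSpec (low : Fin (d+1) → S.B → (S.B →₀ ℝ)) : Prop :=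
  ∀ (i : Fin (d+1)) (l : Dr) (N : List (PolyDec Lp d)) (L : List (Odx Lp d × S.B)),
    low i (S.node l ↑N ↑L) =
      (∑ ib : Fin N.length,
        (if h : (N.get ib).1.1.2 + munit i ≤ (N.get ib).1.2 then
          (((N.get ib).1.2 i - (N.get ib).1.1.2 i : ℕ) : ℝ) •
            (if he : (N.get ib).1.2 - munit i = (N.get ib).1.1.2 then
              Finsupp.single (S.node l ↑(N.eraseIdx ib) ↑L) 1
            else
              Finsupp.single (S.node l ↑(N.set ib ((N.get ib).lower i h he)) ↑L) 1)
        else 0))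
      + ∑ j : Fin L.length, S.replace l N L j (low i (L.get j).2)

/-- Defining recursion of the cutting operator `⋖*_o : 𝔹 → 𝔹 ⊗ 𝔹` (elements of
`𝔹 ⊗ 𝔹` represented as finitely supported functions on pairs of trees, a pair
`(branch, trunk)` recording a cut). -/
def CutSpec (cut : Odx Lp d → S.B → (S.B × S.B →₀ ℝ)) : Prop :=
  ∀ (t : Lp) (p : MIdx d) (l : Dr) (N : List (PolyDec Lp d)) (L : List (Odx Lp d × S.B)),
    cut (t, p) (S.node l ↑N ↑L) =
      (∑ j : Fin L.length,
        (if hc : (L.get j).1.1 = t ∧ (L.get j).1.2 ≤ p then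
          ((mfact (p - (L.get j).1.2) : ℝ))⁻¹ •
            Finsupp.single ((L.get j).2,
              S.node l
                (if he : (L.get j).1.2 = p then (↑N : Multiset (PolyDec Lp d))
                 else (⟨((L.get j).1, p), hc.2, he⟩ ::ₘ (↑N : Multiset (PolyDec Lp d))))
                ↑(L.eraseIdx j)) 1
        else 0))
      + ∑ j : Fin L.length,
          (cut (t, p) (L.get j).2).sum fun ab c =>
            Finsupp.single (ab.1, S.node l ↑N ↑(L.set j ((L.get j).1, ab.2))) c

end TreeB

/-- Defining recursion of the map `Q : 𝔹 → 𝕍` collapsing polynomial decorations. -/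
def QSpec {Lp Dr : Type} {d : ℕ} (SB : TreeB Lp Dr d) (SV : TreeV Lp Dr d)
    (Qf : SB.B → SV.V) : Prop :=
  ∀ (l : Dr) (N : Multiset (PolyDec Lp d)) (M : Multiset (Odx Lp d × SB.B)),
    Qf (SB.node l N M) =
      SV.node l ((N.map fun pd => pd.1.2 - pd.1.1.2).sum) (M.map fun x => (x.1, Qf x.2))

/-- The generic summand of the multivariate Faà di Bruno formula, indexed by `(r, q⃗, m⃗)`;
it vanishes unless `(q⃗, m⃗) ∈ I(r,k)`. -/
noncomputable def fdbSummand {Lp : Type} {d : ℕ} [DecidableEq Lp] (lo : LinearOrder (MIdx d))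
    (F : FnO Lp d) (k : MIdx d)
    (p : Σ r : ℕ, (Fin r → MIdx d) × (Fin r → (Odx Lp d →₀ ℕ))) : FnO Lp d :=
  if (∀ j, p.2.2 j ≠ 0) ∧ (∀ j j' : Fin p.1, j < j' → lo.lt (p.2.1 j) (p.2.1 j')) ∧
      (∀ j, lo.lt 0 (p.2.1 j)) ∧ (∑ j, ((p.2.2 j).sum fun _ n => n) • p.2.1 j) = k then
    fun x =>
      (∏ j, (p.2.2 j).prod fun o n =>
        (x (o.1, o.2 + p.2.1 j) / (mfact (p.2.1 j) : ℝ)) ^ n / (Nat.factorial n : ℝ)) *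
        Dexp (∑ j, p.2.2 j) F x
  else 0

/-! ### Generic decorated trees -/

/-- Decorated rooted trees over node species `N` and edge species `E`,
presented abstractly. -/
structure GTree (N E : Type) where
  T : Type
  node : N → Multiset (E × T) → T
  node_bij : Function.Bijective (fun x : N × Multiset (E × T) => node x.1 x.2)
  ind : ∀ P : T → Prop, (∀ Y M, (∀ x ∈ M, P x.2) → P (node Y M)) → ∀ τ, P τ

namespace GTree

/-- Multilinear expansion of a list of edge-decorated linear combinations of trees into a
linear combination of branch multisets. -/
noncomputable def expandAux {N E : Type} (S : GTree N E) :
    List (E × (S.T →₀ ℝ)) → (Multiset (E × S.T) →₀ ℝ)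
  | [] => Finsupp.single 0 1
  | (e, w) :: L =>
      w.sum fun τ' c => (S.expandAux L).sum fun M c' => Finsupp.single ((e, τ') ::ₘ M) (c * c')

/-- Defining recursion of the functorial extension `𝔗(A)` of a linear map `A` between
the free vector spaces on the node species. -/
def MapSpec {N N' E : Type} (S : GTree N E) (S' : GTree N' E)
    (A : N → (N' →₀ ℝ)) (TA : S.T → (S'.T →₀ ℝ)) : Prop :=
  ∀ (Y : N) (L : List (E × S.T)),
    TA (S.node Y ↑L) =
      (A Y).sum fun Y' c =>
        (S'.expandAux (L.map fun x => (x.1, TA x.2))).sum fun M c' =>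
          Finsupp.single (S'.node Y' M) (c * c')

/-- Defining recursion of the inner product on `𝔗(𝖭,𝖤)` induced by an inner product on
the node species. -/
def IPSpec {N E : Type} (S : GTree N E) (ipN : N → N → ℝ) (ip : S.T → S.T → ℝ) : Prop :=
  ∀ (Y Y' : N) (L L' : List (E × S.T)),
    ip (S.node Y ↑L) (S.node Y' ↑L') =
      ipN Y Y' * ∑ s : Fin L.length ≃ Fin L'.length,
        ∏ j : Fin L.length,
          (if (L.get j).1 = (L'.get (s j)).1 then ip (L.get j).2 (L'.get (s j)).2 else 0)

end GTree

end SPDERenorm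

/-!
Write `a(τ₁, τ₂, τ₃) = (τ₁ ⋖̂₁ τ₂) ⋖̂₂ τ₃ - τ₁ ⋖̂₁ (τ₂ ⋖̂₂ τ₃)` with `⋖̂ᵢ = ⋖̂_{oᵢ}`. In `τ₁ ⋖̂₁ (τ₂ ⋖̂₂ τ₃)`, the terms
where `τ₁` lands on the grafted copy of `τ₂` are exactly `(τ₁ ⋖̂₁ τ₂) ⋖̂₂ τ₃`; in all the others
`τ₁` and `τ₂` are grafted at two places of `τ₃`, which is symmetric in `(τ₁, o₁)` and `(τ₂, o₂)`.
We argue by induction on `τ₃ = Ξ_𝔩 X^k ∏ⱼ 𝓘[τⱼ]`: `a(τ₁, τ₂, τ₃)` is the sum of the `a(τ₁, τ₂, τⱼ)`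
placed in the branches, minus the terms grafting `τ₁` and `τ₂` both at the root, one at the root
and one into a branch, or into two different branches. The last family is symmetric because
replacing two different branches commutes, the first because of
`C(k, ℓ) C(k - ℓ, ℓ') = C(k, ℓ') C(k - ℓ', ℓ)`.
-/

open Finsupp Finset

namespace Finsupp

variable {R α β M : Type*} [CommSemiring R] [AddCommMonoid M] [Module R M]

lemma linearCombination_fun_add (w : α →₀ R) (f g : α → M) :
    linearCombination R (fun a => f a + g a) w =
      linearCombination R f w + linearCombination R g w := by
  simp only [linearCombination_apply, smul_add, Finsupp.sum_add]

lemma linearCombination_fun_sum {ι : Type*} (w : α →₀ R) (s : Finset ι) (f : ι → α → M) :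
    linearCombination R (fun a => ∑ i ∈ s, f i a) w = ∑ i ∈ s, linearCombination R (f i) w := by
  simp only [linearCombination_apply, Finset.smul_sum, Finsupp.sum]
  exact Finset.sum_comm

lemma linearCombination_fun_smul (w : α →₀ R) (c : R) (f : α → M) :
    linearCombination R (fun a => c • f a) w = c • linearCombination R f w := by
  simp only [linearCombination_apply, Finsupp.smul_sum, smul_comm c]

lemma linearCombination_comm (w : α →₀ R) (v : β →₀ R) (h : α → β → M) :
    linearCombination R (fun a => linearCombination R (h a) v) w =
      linearCombination R (fun b => linearCombination R (fun a => h a b) w) v := by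
  simp only [linearCombination_apply, Finsupp.smul_sum]
  rw [Finsupp.sum_comm]
  exact Finsupp.sum_congr fun b _ => Finsupp.sum_congr fun a _ => smul_comm _ _ _

lemma mapDomain_eq_linearCombination (f : α → β) (w : α →₀ R) :
    mapDomain f w = linearCombination R (fun a => single (f a) 1) w := by
  simp only [mapDomain, linearCombination_apply, smul_single_one]

lemma mapDomain_linearCombination {γ : Type*} (f : β → γ) (v : α → β →₀ R) (w : α →₀ R) :
    mapDomain f (linearCombination R v w) = linearCombination R (fun a => mapDomain f (v a)) w :=
  apply_linearCombination R (lmapDomain R R f) v w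

end Finsupp

lemma Nat.choose_mul_choose_sub_comm (n a b : ℕ) :
    n.choose a * (n - a).choose b = n.choose b * (n - b).choose a := by
  have h := Nat.choose_mul (n := n) (Nat.le_add_right a b)
  have h' := Nat.choose_mul (n := n) (Nat.le_add_left b a)
  rw [Nat.add_sub_cancel_left] at h
  rw [Nat.add_sub_cancel] at h'
  rw [← h, ← h', Nat.choose_symm_add]

namespace SPDERenorm

section MultiIndex

variable {d : ℕ}

lemma mchoose_mul_mchoose_sub_comm (k ℓ ℓ' : MIdx d) :
    mchoose k ℓ * mchoose (k - ℓ) ℓ' = mchoose k ℓ' * mchoose (k - ℓ') ℓ := by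
  simp only [mchoose, ← Finset.prod_mul_distrib, Pi.sub_apply, Nat.choose_mul_choose_sub_comm]

lemma mchoose_eq_zero_of_not_le {k ℓ : MIdx d} (h : ¬ ℓ ≤ k) : mchoose k ℓ = 0 := by
  obtain ⟨i, hi⟩ : ∃ i, ¬ ℓ i ≤ k i := by simpa [Pi.le_def] using h
  exact Finset.prod_eq_zero (mem_univ i) (Nat.choose_eq_zero_of_lt (not_le.mp hi))

lemma msum_eq_sum_Iic {A : Type*} [AddCommMonoid A] (m : MIdx d) (f : MIdx d → A) :
    msum m f = ∑ ℓ ∈ Iic m, f ℓ := by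
  let e : (∀ i, Fin (m i + 1)) ≃ Iic m :=
    { toFun := fun e => ⟨fun i => e i, mem_Iic.2 fun i => Nat.lt_succ_iff.1 (e i).2⟩
      invFun := fun ℓ i => ⟨ℓ.1 i, Nat.lt_succ_of_le (mem_Iic.1 ℓ.2 i)⟩ }
  rw [msum, ← Finset.sum_coe_sort (Iic m)]
  exact Fintype.sum_equiv e _ _ fun _ => rfl

end MultiIndex

namespace TreeV

variable {Lp Dr : Type} {d : ℕ} (S : TreeV Lp Dr d)

/-- The first sum of the grafting recursion, with `ℓ` running over all `ℓ ≤ p`: the terms with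
`ℓ ≰ k` vanish since `C(k, ℓ) = 0`. -/
noncomputable def rootGraft (o : Odx Lp d) (τ : S.V) (l : Dr) (k : MIdx d)
    (M : Multiset (Odx Lp d × S.V)) : S.V →₀ ℝ :=
  ∑ ℓ ∈ Iic o.2, (mchoose k ℓ : ℝ) • single (S.node l (k - ℓ) (((o.1, o.2 - ℓ), τ) ::ₘ M)) 1

noncomputable def setBranch (l : Dr) (k : MIdx d) (L : List (Odx Lp d × S.V))
    (j : Fin L.length) (σ : S.V) : S.V :=
  S.node l k ↑(L.set j ((L.get j).1, σ))

noncomputable def graftRootRoot (o₁ : Odx Lp d) (τ₁ : S.V) (o₂ : Odx Lp d) (τ₂ : S.V) (l : Dr)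
    (k : MIdx d) (M : Multiset (Odx Lp d × S.V)) : S.V →₀ ℝ :=
  ∑ ℓ ∈ Iic o₂.2, (mchoose k ℓ : ℝ) • S.rootGraft o₁ τ₁ l (k - ℓ) (((o₂.1, o₂.2 - ℓ), τ₂) ::ₘ M)

lemma graftRootRoot_comm (o₁ : Odx Lp d) (τ₁ : S.V) (o₂ : Odx Lp d) (τ₂ : S.V) (l : Dr)
    (k : MIdx d) (M : Multiset (Odx Lp d × S.V)) :
    S.graftRootRoot o₁ τ₁ o₂ τ₂ l k M = S.graftRootRoot o₂ τ₂ o₁ τ₁ l k M := by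
  simp only [graftRootRoot, rootGraft, Finset.smul_sum, smul_smul]
  rw [Finset.sum_comm]
  refine Finset.sum_congr rfl fun ℓ₁ _ => Finset.sum_congr rfl fun ℓ₂ _ => ?_
  rw [← Nat.cast_mul, ← Nat.cast_mul, mchoose_mul_mchoose_sub_comm, tsub_right_comm,
    Multiset.cons_swap]

variable {S} (graft : Odx Lp d → S.V → S.V → (S.V →₀ ℝ))

noncomputable def graftRootBranch (o₁ : Odx Lp d) (τ₁ : S.V) (o₂ : Odx Lp d) (τ₂ : S.V) (l : Dr)
    (k : MIdx d) (L : List (Odx Lp d × S.V)) : S.V →₀ ℝ :=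
  ∑ j : Fin L.length, linearCombination ℝ
    (fun σ => S.rootGraft o₁ τ₁ l k ↑(L.set j ((L.get j).1, σ))) (graft o₂ τ₂ (L.get j).2)

noncomputable def graftBranchBranch (o₁ : Odx Lp d) (τ₁ : S.V) (o₂ : Odx Lp d) (τ₂ : S.V)
    (l : Dr) (k : MIdx d) (L : List (Odx Lp d × S.V)) : S.V →₀ ℝ :=
  ∑ j : Fin L.length, ∑ j' ∈ univ.erase j, linearCombination ℝ
    (fun σ => mapDomain
      (fun σ' => S.node l k ↑((L.set j ((L.get j).1, σ)).set j' ((L.get j').1, σ')))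
      (graft o₁ τ₁ (L.get j').2))
    (graft o₂ τ₂ (L.get j).2)

lemma graftBranchBranch_comm (o₁ : Odx Lp d) (τ₁ : S.V) (o₂ : Odx Lp d) (τ₂ : S.V) (l : Dr)
    (k : MIdx d) (L : List (Odx Lp d × S.V)) :
    graftBranchBranch graft o₁ τ₁ o₂ τ₂ l k L = graftBranchBranch graft o₂ τ₂ o₁ τ₁ l k L := by
  rw [graftBranchBranch, graftBranchBranch,
    Finset.sum_comm' (t' := univ) (s' := fun j' => univ.erase j') (by simp [and_comm, eq_comm])]
  refine Finset.sum_congr rfl fun j' _ => Finset.sum_congr rfl fun j hj => ?_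
  have hne : (j : ℕ) ≠ j' := Fin.val_ne_of_ne (Finset.ne_of_mem_erase hj)
  simp only [mapDomain_eq_linearCombination (R := ℝ)]
  rw [linearCombination_comm]
  simp only [List.set_comm _ _ hne]

/-- The terms of `τ₁ ⋖̂ (τ₂ ⋖̂ node l k L)` in which neither `τ₁` is grafted onto `τ₂` nor both
are grafted into the same branch. -/
noncomputable def doubleGraft (o₁ : Odx Lp d) (τ₁ : S.V) (o₂ : Odx Lp d) (τ₂ : S.V) (l : Dr)
    (k : MIdx d) (L : List (Odx Lp d × S.V)) : S.V →₀ ℝ :=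
  S.graftRootRoot o₁ τ₁ o₂ τ₂ l k ↑L + graftRootBranch graft o₁ τ₁ o₂ τ₂ l k L +
    graftRootBranch graft o₂ τ₂ o₁ τ₁ l k L + graftBranchBranch graft o₁ τ₁ o₂ τ₂ l k L

lemma doubleGraft_comm (o₁ : Odx Lp d) (τ₁ : S.V) (o₂ : Odx Lp d) (τ₂ : S.V) (l : Dr)
    (k : MIdx d) (L : List (Odx Lp d × S.V)) :
    doubleGraft graft o₁ τ₁ o₂ τ₂ l k L = doubleGraft graft o₂ τ₂ o₁ τ₁ l k L := by
  rw [doubleGraft, doubleGraft, graftRootRoot_comm, graftBranchBranch_comm]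
  abel

noncomputable def associator (o₁ o₂ : Odx Lp d) (τ₁ τ₂ τ₃ : S.V) : S.V →₀ ℝ :=
  linearCombination ℝ (fun σ => graft o₂ σ τ₃) (graft o₁ τ₁ τ₂) -
    linearCombination ℝ (graft o₁ τ₁) (graft o₂ τ₂ τ₃)

variable [DecidableEq Lp] {graft}

lemma graft_node (hgraft : S.GraftSpec graft) (o : Odx Lp d) (τ : S.V) (l : Dr) (k : MIdx d)
    (L : List (Odx Lp d × S.V)) :
    graft o τ (S.node l k ↑L) = S.rootGraft o τ l k ↑L +
      ∑ j, mapDomain (S.setBranch l k L j) (graft o τ (L.get j).2) := by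
  obtain ⟨t, p⟩ := o
  rw [hgraft, msum_eq_sum_Iic, rootGraft]
  congr 1
  refine Finset.sum_subset (Iic_subset_Iic.2 inf_le_right) fun ℓ hℓp hℓ => ?_
  have hℓk : ¬ ℓ ≤ k := fun h => hℓ (mem_Iic.2 (le_inf h (mem_Iic.1 hℓp)))
  rw [mchoose_eq_zero_of_not_le hℓk, Nat.cast_zero, zero_smul]

lemma graft_node_cons (hgraft : S.GraftSpec graft) (o : Odx Lp d) (τ : S.V) (l : Dr)
    (k : MIdx d) (x : Odx Lp d × S.V) (L : List (Odx Lp d × S.V)) :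
    graft o τ (S.node l k (x ::ₘ ↑L)) = S.rootGraft o τ l k (x ::ₘ ↑L) +
      mapDomain (fun σ => S.node l k ((x.1, σ) ::ₘ ↑L)) (graft o τ x.2) +
      ∑ j : Fin L.length, mapDomain (fun σ => S.node l k (x ::ₘ ↑(L.set j ((L.get j).1, σ))))
        (graft o τ (L.get j).2) := by
  rw [Multiset.cons_coe, graft_node hgraft, add_assoc]
  exact congrArg _ (Fin.sum_univ_succ _)

lemma graft_setBranch (hgraft : S.GraftSpec graft) (o : Odx Lp d) (τ : S.V) (l : Dr)
    (k : MIdx d) (L : List (Odx Lp d × S.V)) (j : Fin L.length) (σ : S.V) :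
    graft o τ (S.setBranch l k L j σ) = S.rootGraft o τ l k ↑(L.set j ((L.get j).1, σ)) +
      mapDomain (S.setBranch l k L j) (graft o τ σ) +
      ∑ j' ∈ univ.erase j, mapDomain
        (fun σ' => S.node l k ↑((L.set j ((L.get j).1, σ)).set j' ((L.get j').1, σ')))
        (graft o τ (L.get j').2) := by
  rw [setBranch, graft_node hgraft, add_assoc]
  congr 1
  rw [← Equiv.sum_comp (finCongr List.length_set.symm), ← Finset.add_sum_erase _ _ (mem_univ j)]
  congr 1
  · congr 1
    · funext σ'
      simp [setBranch]
    · simp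
  · refine Finset.sum_congr rfl fun j' hj' => ?_
    have hne : (j : ℕ) ≠ j' := Fin.val_ne_of_ne (Finset.ne_of_mem_erase hj').symm
    congr 1
    · funext σ'
      simp [setBranch, List.getElem_set_ne hne]
    · simp [List.getElem_set_ne hne]

lemma linearCombination_graft_node_left (hgraft : S.GraftSpec graft) (w : S.V →₀ ℝ)
    (o : Odx Lp d) (l : Dr) (k : MIdx d) (L : List (Odx Lp d × S.V)) :
    linearCombination ℝ (fun σ => graft o σ (S.node l k ↑L)) w =
      linearCombination ℝ (fun σ => S.rootGraft o σ l k ↑L) w +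
        ∑ j, mapDomain (S.setBranch l k L j)
          (linearCombination ℝ (fun σ => graft o σ (L.get j).2) w) := by
  simp only [graft_node hgraft, linearCombination_fun_add, linearCombination_fun_sum,
    mapDomain_linearCombination]

lemma linearCombination_graft_rootGraft (hgraft : S.GraftSpec graft) (o₁ : Odx Lp d)
    (τ₁ : S.V) (o₂ : Odx Lp d) (τ₂ : S.V) (l : Dr) (k : MIdx d) (L : List (Odx Lp d × S.V)) :
    linearCombination ℝ (graft o₁ τ₁) (S.rootGraft o₂ τ₂ l k ↑L) =
      S.graftRootRoot o₁ τ₁ o₂ τ₂ l k ↑L +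
        linearCombination ℝ (fun σ => S.rootGraft o₂ σ l k ↑L) (graft o₁ τ₁ τ₂) +
        graftRootBranch graft o₂ τ₂ o₁ τ₁ l k L := by
  rw [rootGraft, map_sum]
  simp only [map_smul, linearCombination_single, one_smul, graft_node_cons hgraft, smul_add,
    Finset.sum_add_distrib]
  congr 1
  · congr 1
    simp only [rootGraft, linearCombination_fun_sum, linearCombination_fun_smul,
      mapDomain_eq_linearCombination (R := ℝ)]
  · simp only [graftRootBranch, rootGraft, linearCombination_fun_sum, linearCombination_fun_smul,
      mapDomain_eq_linearCombination (R := ℝ), Finset.smul_sum]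
    exact Finset.sum_comm

lemma linearCombination_graft_graft_node (hgraft : S.GraftSpec graft) (o₁ : Odx Lp d)
    (τ₁ : S.V) (o₂ : Odx Lp d) (τ₂ : S.V) (l : Dr) (k : MIdx d) (L : List (Odx Lp d × S.V)) :
    linearCombination ℝ (graft o₁ τ₁) (graft o₂ τ₂ (S.node l k ↑L)) =
      linearCombination ℝ (graft o₁ τ₁) (S.rootGraft o₂ τ₂ l k ↑L) +
        graftRootBranch graft o₁ τ₁ o₂ τ₂ l k L +
        ∑ j, mapDomain (S.setBranch l k L j)
          (linearCombination ℝ (graft o₁ τ₁) (graft o₂ τ₂ (L.get j).2)) +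
        graftBranchBranch graft o₁ τ₁ o₂ τ₂ l k L := by
  simp only [graft_node hgraft, map_add, map_sum, linearCombination_mapDomain,
    Function.comp_def, graft_setBranch hgraft, linearCombination_fun_add,
    linearCombination_fun_sum, Finset.sum_add_distrib, mapDomain_linearCombination]
  rw [graftRootBranch, graftBranchBranch]
  abel

lemma associator_node (hgraft : S.GraftSpec graft) (o₁ o₂ : Odx Lp d) (τ₁ τ₂ : S.V) (l : Dr)
    (k : MIdx d) (L : List (Odx Lp d × S.V)) :
    associator graft o₁ o₂ τ₁ τ₂ (S.node l k ↑L) =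
      ∑ j, mapDomain (S.setBranch l k L j) (associator graft o₁ o₂ τ₁ τ₂ (L.get j).2) -
        doubleGraft graft o₁ τ₁ o₂ τ₂ l k L := by
  rw [associator, linearCombination_graft_node_left hgraft,
    linearCombination_graft_graft_node hgraft, linearCombination_graft_rootGraft hgraft,
    doubleGraft]
  simp only [associator, mapDomain_sub, Finset.sum_sub_distrib]
  abel

theorem associator_comm (hgraft : S.GraftSpec graft) (o₁ o₂ : Odx Lp d) (τ₁ τ₂ τ₃ : S.V) :
    associator graft o₁ o₂ τ₁ τ₂ τ₃ = associator graft o₂ o₁ τ₂ τ₁ τ₃ := by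
  induction τ₃ using S.ind with
  | _ l k M ih =>
    obtain ⟨L, rfl⟩ : ∃ L : List (Odx Lp d × S.V), ↑L = M := ⟨M.toList, M.coe_toList⟩
    rw [associator_node hgraft, associator_node hgraft, doubleGraft_comm]
    congr 1
    refine Finset.sum_congr rfl fun j _ => ?_
    rw [ih _ (Multiset.mem_coe.2 (List.get_mem L j))]

end TreeV

theorem statement14_general
    {d : ℕ} {Lp Dr : Type} [DecidableEq Lp]
    (S : TreeV Lp Dr d)
    (graft : Odx Lp d → S.V → S.V → (S.V →₀ ℝ)) (hgraft : S.GraftSpec graft) :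
    ∀ (t₁ t₂ : Lp) (p₁ p₂ : MIdx d) (τ₁ τ₂ τ₃ : S.V),
      (((graft (t₁, p₁) τ₁ τ₂).sum fun σ c => c • graft (t₂, p₂) σ τ₃)
        - (graft (t₂, p₂) τ₂ τ₃).sum fun σ c => c • graft (t₁, p₁) τ₁ σ) =
      (((graft (t₂, p₂) τ₂ τ₁).sum fun σ c => c • graft (t₁, p₁) σ τ₃)
        - (graft (t₁, p₁) τ₁ τ₃).sum fun σ c => c • graft (t₂, p₂) τ₂ σ) :=
  fun t₁ t₂ p₁ p₂ τ₁ τ₂ τ₃ => TreeV.associator_comm hgraft (t₁, p₁) (t₂, p₂) τ₁ τ₂ τ₃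

/-- identity `pre_lie_identity`: the multi-pre-Lie identity for the
grafting operators on decorated trees, with the grafting operators extended bilinearly
to `𝕍`. -/
theorem statement14
    {d : ℕ} {Lp Dr : Type} [Fintype Lp] [DecidableEq Lp]
    (S : TreeV Lp Dr d)
    (graft : Odx Lp d → S.V → S.V → (S.V →₀ ℝ)) (hgraft : S.GraftSpec graft) :
    ∀ (t₁ t₂ : Lp) (p₁ p₂ : MIdx d) (τ₁ τ₂ τ₃ : S.V),
      (((graft (t₁, p₁) τ₁ τ₂).sum fun σ c => c • graft (t₂, p₂) σ τ₃)
        - (graft (t₂, p₂) τ₂ τ₃).sum fun σ c => c • graft (t₁, p₁) τ₁ σ) =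
      (((graft (t₂, p₂) τ₂ τ₁).sum fun σ c => c • graft (t₁, p₁) σ τ₃)
        - (graft (t₁, p₁) τ₁ τ₃).sum fun σ c => c • graft (t₂, p₂) τ₂ σ) :=
  statement14_general S graft hgraft

end SPDERenorm
end

section
/- The recursive inner product on decorated trees is diagonal with symmetry factors: for all τ, τ̄ ∈ 𝒱 one has ⟨τ, τ̄⟩ = δ_{τ,τ̄}·S(τ), where ⟨·,·⟩ is the recursively defined inner product on 𝕍 and S is the symmetry factor defined recursively by S(Ξ_𝔩 X^k ∏_{j=1}^m 𝓘_{o_j}[τ_j]^{β_j}) := k!·∏_{j=1}^m S(τ_j)^{β_j}·β_j!, the terms being grouped so that the pairs (o_j,τ_j) are pairwise distinct. -/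
/-
Common framework: multi-indices, the algebra of smooth functions on ℝ^𝒪,
and the spaces of decorated trees 𝒱 and 𝔅 of [Bruned–Chandra–Chevyrev–Hairer,
"Renormalising SPDEs in regularity structures"], presented abstractly together
with the defining recursions of the various operators on them.
-/

open scoped BigOperators Classical

/-!
Expanding the recursion, `⟨τ, τ̄⟩` is `k!` times a sum over all bijections between the
branches of `τ` and of `τ̄`; by induction only bijections matching every branch with an
identical branch contribute, each contributing `∏ⱼ S(τⱼ)`. Such bijections exist iff the
branch multisets agree, and they then form a torsor under the stabiliser of the branch
labelling, of order `∏ βⱼ!`.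
-/

open Finset

section EquivMatching

variable {ι κ α : Type*} [Fintype ι] [Fintype κ] {f : ι → α} {g : κ → α}

theorem map_univ_eq_of_comp_equiv_eq (s : ι ≃ κ) (hs : g ∘ s = f) :
    univ.val.map f = univ.val.map g := by
  have hs_univ : univ.val.map s = univ.val := by simp
  rw [← hs, ← Multiset.map_map, hs_univ]

variable [DecidableEq α]

theorem Fintype.card_fiber_eq_count (f : ι → α) (x : α) :
    Fintype.card {a // f a = x} = (univ.val.map f).count x := by
  rw [Multiset.count_map, Fintype.card_subtype]
  simp only [eq_comm, Finset.card, Finset.filter_val]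

theorem exists_equiv_comp_eq_of_map_univ_eq (h : univ.val.map f = univ.val.map g) :
    ∃ s : ι ≃ κ, g ∘ s = f := by
  have fibre : ∀ x, {a // f a = x} ≃ {b // g b = x} := fun x =>
    Fintype.equivOfCardEq <| by
      rw [Fintype.card_fiber_eq_count, Fintype.card_fiber_eq_count, h]
  exact ⟨(Equiv.sigmaFiberEquiv f).symm.trans
    ((Equiv.sigmaCongrRight fibre).trans (Equiv.sigmaFiberEquiv g)),
    funext fun a => (fibre (f a) ⟨a, rfl⟩).2⟩

theorem Fintype.card_equiv_comp_eq [DecidableEq ι] [DecidableEq κ] :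
    Fintype.card {s : ι ≃ κ // g ∘ s = f} =
      if univ.val.map f = univ.val.map g then
        ∏ x ∈ (univ.val.map f).toFinset, ((univ.val.map f).count x).factorial
      else 0 := by
  split_ifs with h
  · obtain ⟨s₀, rfl⟩ := exists_equiv_comp_eq_of_map_univ_eq h
    have toStabilizer :
        {s : ι ≃ κ // g ∘ s = g ∘ s₀} ≃ {σ : Equiv.Perm ι // (g ∘ s₀) ∘ σ = g ∘ s₀} :=
      ((Equiv.refl ι).equivCongr s₀.symm).subtypeEquiv fun s => by simp [funext_iff]
    rw [Fintype.card_congr toStabilizer, DomMulAct.stabilizer_card']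
    exact Finset.prod_congr rfl fun x _ => by rw [Fintype.card_fiber_eq_count]
  · rw [Fintype.card_eq_zero_iff]
    exact ⟨fun s => h (map_univ_eq_of_comp_equiv_eq s.1 s.2)⟩

theorem sum_equiv_prod_ite_eq [DecidableEq ι] [DecidableEq κ] {R : Type*} [CommSemiring R]
    (w : α → R) :
    ∑ s : ι ≃ κ, ∏ i, (if f i = g (s i) then w (f i) else 0) =
      if univ.val.map f = univ.val.map g then
        ∏ x ∈ (univ.val.map f).toFinset,
          ((univ.val.map f).count x).factorial * w x ^ (univ.val.map f).count x
      else 0 := by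
  have weight : ∏ i, w (f i) =
      ∏ x ∈ (univ.val.map f).toFinset, w x ^ (univ.val.map f).count x := by
    rw [← Finset.prod_multiset_map_count, Multiset.map_map]
    rfl
  have solutions : Fintype.card {s : ι ≃ κ // ∀ i, f i = g (s i)} =
      Fintype.card {s : ι ≃ κ // g ∘ s = f} :=
    Fintype.card_congr <| Equiv.subtypeEquivRight fun s => by simp [funext_iff, eq_comm]
  simp_rw [Finset.prod_ite_zero, Finset.mem_univ, true_implies]
  rw [Finset.sum_ite, Finset.sum_const_zero, add_zero, Finset.sum_const,
    ← Fintype.card_subtype, solutions, Fintype.card_equiv_comp_eq, weight]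
  split_ifs
  · rw [nsmul_eq_mul, Nat.cast_prod, ← Finset.prod_mul_distrib]
  · rw [zero_smul]

theorem List.sum_equiv_prod_ite_get_eq {R : Type*} [CommSemiring R] (w : α → R)
    (L L' : List α) :
    ∑ s : Fin L.length ≃ Fin L'.length,
        ∏ j, (if L.get j = L'.get (s j) then w (L.get j) else 0) =
      if (L : Multiset α) = L' then
        ∏ x ∈ (L : Multiset α).toFinset, ((L : Multiset α).count x).factorial *
          w x ^ (L : Multiset α).count x
      else 0 := by
  have map_get : ∀ L : List α, univ.val.map L.get = (L : Multiset α) := fun L => by simp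
  simpa only [map_get] using sum_equiv_prod_ite_eq (f := L.get) (g := L'.get) w

end EquivMatching

namespace SPDERenorm

theorem TreeV.node_inj {Lp Dr : Type} {d : ℕ} (S : TreeV Lp Dr d) {l l' : Dr} {k k' : MIdx d}
    {M M' : Multiset (Odx Lp d × S.V)} :
    S.node l k M = S.node l' k' M' ↔ l = l' ∧ k = k' ∧ M = M' := by
  refine ⟨fun h => ?_, by rintro ⟨rfl, rfl, rfl⟩; rfl⟩
  simpa [Prod.ext_iff] using S.node_bij.injective (a₁ := (l, k, M)) (a₂ := (l', k', M')) h

theorem statement16_general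
    {d : ℕ} {Lp Dr : Type} [DecidableEq Lp]
    (S : TreeV Lp Dr d) [DecidableEq S.V]
    (ip : S.V → S.V → ℝ) (hip : S.IPSpec ip)
    (sym : S.V → ℕ) (hsym : S.SymSpec sym) :
    ∀ τ τb : S.V, ip τ τb = if τ = τb then (sym τ : ℝ) else 0 := by
  refine S.ind _ fun l k M ih τb => ?_
  obtain ⟨⟨l', k', M'⟩, rfl⟩ := S.node_bij.surjective τb
  obtain ⟨L, rfl⟩ : ∃ L : List (Odx Lp d × S.V), (L : Multiset _) = M :=
    Quotient.exists_rep M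
  obtain ⟨L', rfl⟩ : ∃ L' : List (Odx Lp d × S.V), (L' : Multiset _) = M' :=
    Quotient.exists_rep M'
  -- the instance is a free argument so that this also rewrites the classical `if` of `IPSpec`
  have branch_pairing : ∀ (j : Fin L.length) (x' : Odx Lp d × S.V)
      {_ : Decidable ((L.get j).1 = x'.1)},
      (if (L.get j).1 = x'.1 then ip (L.get j).2 x'.2 else 0) =
        if L.get j = x' then (sym (L.get j).2 : ℝ) else 0 := fun j x' _ => by
    rw [ih _ (Multiset.mem_coe.2 (L.get_mem j)), ← ite_and]
    exact if_congr Prod.ext_iff.symm rfl rfl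
  rw [hip, Finset.sum_congr rfl fun s _ => Finset.prod_congr rfl fun j _ =>
      branch_pairing j (L'.get (s j)),
    List.sum_equiv_prod_ite_get_eq (fun x => (sym x.2 : ℝ)) L L']
  simp only [S.node_inj]
  rw [hsym]
  push_cast
  split_ifs <;> simp_all

/-- the recursively defined inner product on decorated trees is diagonal
with symmetry factors: `⟨τ, τ̄⟩ = δ_{τ,τ̄}·S(τ)`. -/
theorem statement16
    {d : ℕ} {Lp Dr : Type} [Fintype Lp] [DecidableEq Lp]
    (S : TreeV Lp Dr d) [DecidableEq S.V]
    (ip : S.V → S.V → ℝ) (hip : S.IPSpec ip)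
    (sym : S.V → ℕ) (hsym : S.SymSpec sym) :
    ∀ τ τb : S.V, ip τ τb = if τ = τb then (sym τ : ℝ) else 0 :=
  statement16_general S ip hip sym hsym

end SPDERenorm
end

section
/- Vanishing of Υ and non-vanishing trees: Let F = (F^𝔩_𝔱)_{𝔱∈𝔏₊,𝔩∈𝔏₋⊔{𝟎}} with every F^𝔩_𝔱 ∈ 𝒫, let 𝔱 ∈ 𝔏₊ and τ ∈ T̊. (i) If τ is not 𝔱-non-vanishing for F, then Υ^F_𝔱[τ] = 0. (ii) If in addition every F^𝔩_𝔱 is a polynomial (a real polynomial in finitely many of the coordinate functions 𝒳_o), then the converse holds as well: Υ^F_𝔱[τ] ≠ 0 if and only if τ is 𝔱-non-vanishing for F. -/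
/-
Common framework: multi-indices, the algebra of smooth functions on ℝ^𝒪,
and the spaces of decorated trees 𝒱 and 𝔅 of [Bruned–Chandra–Chevyrev–Hairer,
"Renormalising SPDEs in regularity structures"], presented abstractly together
with the defining recursions of the various operators on them.
-/

open scoped BigOperators Classical

/-!
Part (i) is immediate from the recursion: a vanishing factor `(∂^k ∏ D) F^𝔩_𝔱` or a vanishing
`Υ` of a branch kills the product defining `Υ^F_𝔱[τ]`. For (ii), evaluation identifies real
polynomials with polynomial functions on `ℝ^𝒪` (as `ℝ` is infinite), this class is stable under
`D_o` and `∂_i`, and it inherits from `ℝ[𝒳]` the absence of zero divisors; so by induction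
`Υ^F_𝔱[τ]` is a product of nonzero polynomial functions whenever `τ` is `𝔱`-non-vanishing.
-/

theorem RingHom.mul_ne_zero_of_mem_range {R A : Type*} [Ring R] [NoZeroDivisors R] [Ring A]
    {f : R →+* A} (hf : Function.Injective f) {a b : A}
    (ha : a ∈ f.range) (hb : b ∈ f.range) (ha0 : a ≠ 0) (hb0 : b ≠ 0) : a * b ≠ 0 := by
  obtain ⟨r, rfl⟩ := ha
  obtain ⟨s, rfl⟩ := hb
  rw [← map_mul, map_ne_zero_iff f hf]
  exact mul_ne_zero ((map_ne_zero_iff f hf).1 ha0) ((map_ne_zero_iff f hf).1 hb0)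

theorem RingHom.prod_ne_zero_of_mem_range {ι R A : Type*} [CommRing R] [IsDomain R]
    [CommRing A] {f : R →+* A} (hf : Function.Injective f)
    {s : Finset ι} {g : ι → A} (hg : ∀ i ∈ s, g i ∈ f.range ∧ g i ≠ 0) :
    ∏ i ∈ s, g i ∈ f.range ∧ ∏ i ∈ s, g i ≠ 0 :=
  Finset.prod_induction g (fun a => a ∈ f.range ∧ a ≠ 0)
    (fun _ _ ha hb => ⟨mul_mem ha.1 hb.1, f.mul_ne_zero_of_mem_range hf ha.1 hb.1 ha.2 hb.2⟩)
    ⟨one_mem _, (map_one f ▸ (map_ne_zero_iff f hf).2 one_ne_zero)⟩ hg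

namespace MvPolynomial

theorem hasDerivAt_eval_update {σ : Type*} [DecidableEq σ] (P : MvPolynomial σ ℝ)
    (x : σ → ℝ) (i : σ) (a : ℝ) :
    HasDerivAt (fun t => eval (Function.update x i t) P)
      (eval (Function.update x i a) (pderiv i P)) a := by
  induction P using MvPolynomial.induction_on with
  | C c => simpa using hasDerivAt_const a c
  | add p q hp hq =>
      simp only [map_add]
      exact hp.add hq
  | mul_X p j hp =>
      have hX : HasDerivAt (fun t => Function.update x i t j)
          (Pi.single (M := fun _ => ℝ) i 1 j) a := by
        rcases eq_or_ne j i with rfl | hji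
        · simpa using hasDerivAt_id' a
        · simpa [Function.update_of_ne hji, hji] using hasDerivAt_const a (x j)
      simp only [map_mul, eval_X, pderiv_mul, pderiv_X, map_add]
      refine (hp.fun_mul hX).congr_deriv ?_
      rcases eq_or_ne j i with rfl | hji <;> simp [*]

end MvPolynomial

namespace SPDERenorm

open MvPolynomial

noncomputable def polyEval (σ : Type*) : MvPolynomial σ ℝ →+* ((σ → ℝ) → ℝ) :=
  RingHom.pi fun x => eval x

@[simp]
theorem polyEval_apply {σ : Type*} (P : MvPolynomial σ ℝ) (x : σ → ℝ) :
    polyEval σ P x = eval x P :=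
  rfl

theorem polyEval_injective (σ : Type*) : Function.Injective (polyEval σ) :=
  fun _ _ h => MvPolynomial.funext (congrFun h)

section PolynomialFunctions

variable {Lp : Type} {d : ℕ}

theorem IsPolyFn.mem_range {F : FnO Lp d} (hF : IsPolyFn F) :
    F ∈ (polyEval (Odx Lp d)).range := by
  obtain ⟨s, P, hP⟩ := hF
  exact ⟨rename Subtype.val P, funext fun x => by rw [hP, polyEval_apply, eval_rename]; rfl⟩

variable [DecidableEq Lp]

theorem Dpart_polyEval (o : Odx Lp d) (P : MvPolynomial (Odx Lp d) ℝ) :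
    Dpart o (polyEval _ P) = polyEval _ (pderiv o P) := by
  funext x
  simpa only [Dpart, polyEval_apply, Function.update_eq_self] using
    (hasDerivAt_eval_update P x o (x o)).deriv

theorem pderivO_polyEval (i : Fin (d+1)) (P : MvPolynomial (Odx Lp d) ℝ) :
    pderivO i (polyEval _ P) =
      polyEval _ (∑ o ∈ P.vars, X (o.1, o.2 + munit i) * pderiv o P) := by
  funext x
  simp only [pderivO, Xc, Dpart_polyEval, polyEval_apply, map_sum, map_mul, eval_X]
  refine finsum_eq_sum_of_support_subset _ fun o ho => ?_
  by_contra hov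
  exact ho (by simp [pderiv_eq_zero_of_notMem_vars hov])

theorem mpderiv_mem {s : Set (FnO Lp d)} (hs : ∀ i, ∀ F ∈ s, pderivO i F ∈ s) (k : MIdx d)
    {F : FnO Lp d} (hF : F ∈ s) : mpderiv k F ∈ s := by
  unfold mpderiv
  induction List.finRange (d+1) with
  | nil => exact hF
  | cons i l ih => exact Function.Iterate.rec (· ∈ s) ih (hs i) (k i)

theorem Dlist_mem {s : Set (FnO Lp d)} (hs : ∀ o, ∀ F ∈ s, Dpart o F ∈ s)
    (L : List (Odx Lp d)) {F : FnO Lp d} (hF : F ∈ s) : Dlist L F ∈ s := by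
  induction L with
  | nil => exact hF
  | cons o L ih => exact hs o _ ih

theorem mpderiv_Dlist_mem_range (k : MIdx d) (L : List (Odx Lp d)) {F : FnO Lp d}
    (hF : F ∈ (polyEval (Odx Lp d)).range) :
    mpderiv k (Dlist L F) ∈ (polyEval (Odx Lp d)).range := by
  refine mpderiv_mem ?_ k (Dlist_mem ?_ L hF)
  · rintro i _ ⟨P, rfl⟩
    exact ⟨_, (pderivO_polyEval i P).symm⟩
  · rintro o _ ⟨P, rfl⟩
    exact ⟨_, (Dpart_polyEval o P).symm⟩

end PolynomialFunctions

namespace TreeV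

variable {Lp Dr : Type} {d : ℕ} (S : TreeV Lp Dr d)

theorem induction_on_list {P : S.V → Prop}
    (h : ∀ l k (L : List (Odx Lp d × S.V)), (∀ j : Fin L.length, P (L.get j).2) →
      P (S.node l k ↑L)) (τ : S.V) : P τ := by
  refine S.ind P (fun l k M hM => ?_) τ
  obtain ⟨L, rfl⟩ := Quot.exists_rep M
  exact h l k L fun j => hM _ (List.get_mem L j)

variable [DecidableEq Lp] {S} {F : Lp → Dr → FnO Lp d} {Ups : Lp → S.V → FnO Lp d}

theorem UpsSpec.node_eq (hUps : S.UpsSpec F Ups) (t : Lp) (l : Dr) (k : MIdx d)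
    (L : List (Odx Lp d × S.V)) :
    Ups t (S.node l k ↑L) =
      (∏ j : Fin L.length, Ups (L.get j).1.1 (L.get j).2) *
        mpderiv k (Dlist (L.map Prod.fst) (F t l)) := by
  rw [hUps]
  funext x
  simp only [Pi.mul_apply, Finset.prod_apply]

theorem UpsSpec.eq_zero_of_not_NV (hUps : S.UpsSpec F Ups) {NV : Lp → S.V → Prop}
    (hNV : S.NVSpec F NV) (τ : S.V) : ∀ t, ¬ NV t τ → Ups t τ = 0 := by
  induction τ using S.induction_on_list with
  | h l k L ih =>
    intro t hnv
    rw [hNV, not_and_or, not_not, not_forall] at hnv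
    rw [hUps.node_eq]
    rcases hnv with hD | ⟨j, hj⟩
    · rw [hD, mul_zero]
    · rw [Finset.prod_eq_zero (Finset.mem_univ j) (ih j _ hj), zero_mul]

theorem UpsSpec.mem_range (hUps : S.UpsSpec F Ups) (hF : ∀ t l, IsPolyFn (F t l)) (τ : S.V) :
    ∀ t, Ups t τ ∈ (polyEval (Odx Lp d)).range := by
  induction τ using S.induction_on_list with
  | h l k L ih =>
    intro t
    rw [hUps.node_eq]
    exact mul_mem (prod_mem fun j _ => ih j _)
      (mpderiv_Dlist_mem_range k _ (hF t l).mem_range)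

theorem UpsSpec.ne_zero_of_NV (hUps : S.UpsSpec F Ups) (hF : ∀ t l, IsPolyFn (F t l))
    {NV : Lp → S.V → Prop} (hNV : S.NVSpec F NV) (τ : S.V) :
    ∀ t, NV t τ → Ups t τ ≠ 0 := by
  induction τ using S.induction_on_list with
  | h l k L ih =>
    intro t hnv
    rw [hNV] at hnv
    rw [hUps.node_eq]
    have hprod := RingHom.prod_ne_zero_of_mem_range (polyEval_injective _) (s := .univ)
      fun j _ => ⟨hUps.mem_range hF _ _, ih j _ (hnv.2 j)⟩
    exact RingHom.mul_ne_zero_of_mem_range (polyEval_injective _) hprod.1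
      (mpderiv_Dlist_mem_range k _ (hF t l).mem_range) hprod.2 hnv.1

end TreeV

-- `𝔇 = 𝔏₋ ⊔ {𝟎}` is encoded as `Option Lm`, with `none = 𝟎`.
theorem statement18_general
    {d : ℕ} {Lp Lm : Type} [DecidableEq Lp]
    (F : Lp → Option Lm → FnO Lp d)
    (S : TreeV Lp (Option Lm) d)
    (Ups : Lp → S.V → FnO Lp d) (hUps : S.UpsSpec F Ups)
    (NV : Lp → S.V → Prop) (hNV : S.NVSpec F NV) :
    (∀ (t : Lp) (τ : S.V), ¬ NV t τ → Ups t τ = 0) ∧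
      ((∀ t l, IsPolyFn (F t l)) →
        ∀ (t : Lp) (τ : S.V), Ups t τ ≠ 0 ↔ NV t τ) :=
  ⟨fun t τ => hUps.eq_zero_of_not_NV hNV τ t, fun hF t τ =>
    ⟨not_imp_comm.1 (hUps.eq_zero_of_not_NV hNV τ t), hUps.ne_zero_of_NV hF hNV τ t⟩⟩

/-- vanishing of `Υ` and non-vanishing trees. (i) If `τ` is not
`𝔱`-non-vanishing for `F` then `Υ^F_𝔱[τ] = 0`. (ii) If moreover every `F^𝔩_𝔱` is a
polynomial, then `Υ^F_𝔱[τ] ≠ 0` if and only if `τ` is `𝔱`-non-vanishing for `F`.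
Here `𝔇 = 𝔏₋ ⊔ {𝟎}` is encoded as `Option Lm` with `none = 𝟎`. -/
theorem statement18
    {d : ℕ} {Lp Lm : Type} [Fintype Lp] [DecidableEq Lp] [Fintype Lm]
    (Om Op : Set (Odx Lp d))
    (hdisj : ∀ o, ¬(o ∈ Om ∧ o ∈ Op)) (hcover : ∀ o, o ∈ Om ∨ o ∈ Op)
    (F : Lp → Option Lm → FnO Lp d) (hF : ∀ t l, IsP Om Op (F t l))
    (S : TreeV Lp (Option Lm) d)
    (Ups : Lp → S.V → FnO Lp d) (hUps : S.UpsSpec F Ups)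
    (NV : Lp → S.V → Prop) (hNV : S.NVSpec F NV) :
    (∀ (t : Lp) (τ : S.V), ¬ NV t τ → Ups t τ = 0) ∧
      ((∀ t l, IsPolyFn (F t l)) →
        ∀ (t : Lp) (τ : S.V), Ups t τ ≠ 0 ↔ NV t τ) :=
  statement18_general F S Ups hUps NV hNV

end SPDERenorm
end
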